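/- Let R be a relation on subdistributions such that Δ R Θ implies |Δ| = |Θ| (mass-preserving). Then the weak linear closure lc(R) is linear, i.e. both left-linear and right-linear. -/

import Mathlib

open scoped BigOperators

/-- The mass of a subdistribution. -/
noncomputable def mass {S : Type*} (Δ : S → ℝ) : ℝ := ∑ᶠ s, Δ s

/-- A subdistribution over `S`. -/
def IsSubdist {S : Type*} (Δ : S → ℝ) : Prop :=
  (Function.support Δ).Finite ∧ (∀ s, 0 ≤ Δ s ∧ Δ s ≤ 1) ∧ mass Δ ≤ 1

/-- The weak linear closure `lc(R)` of a relation on subdistributions. -/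
inductive LC {S : Type*} (R : (S → ℝ) → (S → ℝ) → Prop) :
    (S → ℝ) → (S → ℝ) → Prop where
  | comb (n : ℕ) (p : Fin n → ℝ) (Δi Θi : Fin n → S → ℝ) :
      (∀ i, 0 ≤ p i) → (∀ i, R (Δi i) (Θi i)) →
      mass (fun s => ∑ i, p i * Δi i s) ≤ 1 →
      mass (fun s => ∑ i, p i * Θi i s) ≤ 1 →
      LC R (fun s => ∑ i, p i * Δi i s) (fun s => ∑ i, p i * Θi i s)

/-! Mass is linear on finitely supported functions, so mass preservation passes from `R` to
`lc(R)` and then to any combination of `lc(R)`-related pairs: the two sides of such a combination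
have equal mass, hence one is defined exactly when the other is. A combination of combinations of
`R`-related pairs is again one, indexed by a sigma type, so it lies in `lc(R)`. -/

section Mass

variable {S ι : Type*} [Fintype ι]

theorem finite_support_weightedSum (p : ι → ℝ) {Δ : ι → S → ℝ}
    (hΔ : ∀ i, (Function.support (Δ i)).Finite) :
    (Function.support fun s => ∑ i, p i * Δ i s).Finite :=
  (Set.finite_iUnion hΔ).subset fun s hs => by
    obtain ⟨i, -, hi⟩ := Finset.exists_ne_zero_of_sum_ne_zero hs
    exact Set.mem_iUnion.2 ⟨i, right_ne_zero_of_mul hi⟩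

theorem mass_weightedSum (p : ι → ℝ) {Δ : ι → S → ℝ}
    (hΔ : ∀ i, (Function.support (Δ i)).Finite) :
    mass (fun s => ∑ i, p i * Δ i s) = ∑ i, p i * mass (Δ i) := by
  rw [mass, finsum_sum_comm _ _ fun i _ =>
    (hΔ i).subset (Function.support_mul_subset_right _ _)]
  exact Finset.sum_congr rfl fun i _ => (mul_finsum _ _).symm

end Mass

namespace LC

variable {S : Type*} {R : (S → ℝ) → (S → ℝ) → Prop}

theorem comb_of_fintype {ι : Type*} [Fintype ι] (p : ι → ℝ) (Δi Θi : ι → S → ℝ)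
    (hp : ∀ i, 0 ≤ p i) (hR : ∀ i, R (Δi i) (Θi i))
    (hΔ : mass (fun s => ∑ i, p i * Δi i s) ≤ 1) (hΘ : mass (fun s => ∑ i, p i * Θi i s) ≤ 1) :
    LC R (fun s => ∑ i, p i * Δi i s) (fun s => ∑ i, p i * Θi i s) := by
  let e := (Fintype.equivFin ι).symm
  have reindex : ∀ Γ : ι → S → ℝ,
      (fun s => ∑ i, p i * Γ i s) = fun s => ∑ k, p (e k) * Γ (e k) s :=
    fun Γ => funext fun s => (e.sum_comp fun i => p i * Γ i s).symm
  rw [reindex Δi] at hΔ ⊢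
  rw [reindex Θi] at hΘ ⊢
  exact comb _ _ _ _ (fun k => hp (e k)) (fun k => hR (e k)) hΔ hΘ

theorem exists_weightedSum_eq {Δ Θ : S → ℝ} (h : LC R Δ Θ) :
    ∃ (m : ℕ) (q : Fin m → ℝ) (A B : Fin m → S → ℝ), (∀ j, 0 ≤ q j) ∧ (∀ j, R (A j) (B j)) ∧
      Δ = (fun s => ∑ j, q j * A j s) ∧ Θ = (fun s => ∑ j, q j * B j s) := by
  cases h with
  | comb m q A B hq hR _ _ => exact ⟨m, q, A, B, hq, hR, rfl, rfl⟩

theorem weightedSum {n : ℕ} (p : Fin n → ℝ) {Δi Θi : Fin n → S → ℝ}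
    (hp : ∀ i, 0 ≤ p i) (hLC : ∀ i, LC R (Δi i) (Θi i))
    (hΔ : mass (fun s => ∑ i, p i * Δi i s) ≤ 1) (hΘ : mass (fun s => ∑ i, p i * Θi i s) ≤ 1) :
    LC R (fun s => ∑ i, p i * Δi i s) (fun s => ∑ i, p i * Θi i s) := by
  choose m q A B hq hR hΔi hΘi using fun i => exists_weightedSum_eq (hLC i)
  have flatten : ∀ (Γi : Fin n → S → ℝ) (C : ∀ i, Fin (m i) → S → ℝ),
      (∀ i, Γi i = fun s => ∑ j, q i j * C i j s) →
      (fun s => ∑ i, p i * Γi i s) =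
        fun s => ∑ x : Σ i, Fin (m i), p x.1 * q x.1 x.2 * C x.1 x.2 s := by
    intro Γi C hΓ
    funext s
    simp only [hΓ, Fintype.sum_sigma, Finset.mul_sum, mul_assoc]
  rw [flatten Δi A hΔi] at hΔ ⊢
  rw [flatten Θi B hΘi] at hΘ ⊢
  exact comb_of_fintype _ _ _ (fun x => mul_nonneg (hp _) (hq _ _)) (fun x => hR _ _) hΔ hΘ

variable (hsub : ∀ Δ Θ, R Δ Θ → IsSubdist Δ ∧ IsSubdist Θ)
include hsub

theorem finite_support_left {Δ Θ : S → ℝ} (h : LC R Δ Θ) : (Function.support Δ).Finite := by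
  cases h with
  | comb _ p _ _ _ hR _ _ => exact finite_support_weightedSum p fun i => (hsub _ _ (hR i)).1.1

theorem finite_support_right {Δ Θ : S → ℝ} (h : LC R Δ Θ) : (Function.support Θ).Finite := by
  cases h with
  | comb _ p _ _ _ hR _ _ => exact finite_support_weightedSum p fun i => (hsub _ _ (hR i)).2.1

theorem mass_eq (hmass : ∀ Δ Θ, R Δ Θ → mass Δ = mass Θ) {Δ Θ : S → ℝ} (h : LC R Δ Θ) :
    mass Δ = mass Θ := by
  cases h with
  | comb _ p _ _ _ hR _ _ =>
    rw [mass_weightedSum p fun i => (hsub _ _ (hR i)).1.1,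
      mass_weightedSum p fun i => (hsub _ _ (hR i)).2.1]
    exact Finset.sum_congr rfl fun i _ => by rw [hmass _ _ (hR i)]

theorem mass_weightedSum_eq (hmass : ∀ Δ Θ, R Δ Θ → mass Δ = mass Θ) {n : ℕ} (p : Fin n → ℝ)
    {Δi Θi : Fin n → S → ℝ} (hLC : ∀ i, LC R (Δi i) (Θi i)) :
    mass (fun s => ∑ i, p i * Δi i s) = mass (fun s => ∑ i, p i * Θi i s) := by
  rw [mass_weightedSum p fun i => finite_support_left hsub (hLC i),
    mass_weightedSum p fun i => finite_support_right hsub (hLC i)]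
  exact Finset.sum_congr rfl fun i _ => by rw [mass_eq hsub hmass (hLC i)]

end LC

/-- if `R` relates subdistributions and is mass-preserving,
then the weak linear closure `lc(R)` is linear (left- and right-linear). -/
theorem lc_linear {S : Type*} (R : (S → ℝ) → (S → ℝ) → Prop)
    (hsub : ∀ Δ Θ, R Δ Θ → IsSubdist Δ ∧ IsSubdist Θ)
    (hmass : ∀ Δ Θ, R Δ Θ → mass Δ = mass Θ) :
    (∀ (n : ℕ) (p : Fin n → ℝ) (Δi Θi : Fin n → S → ℝ),
      (∀ i, 0 ≤ p i) → (∀ i, LC R (Δi i) (Θi i)) →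
      mass (fun s => ∑ i, p i * Δi i s) ≤ 1 →
      mass (fun s => ∑ i, p i * Θi i s) ≤ 1 ∧
        LC R (fun s => ∑ i, p i * Δi i s) (fun s => ∑ i, p i * Θi i s)) ∧
    (∀ (n : ℕ) (p : Fin n → ℝ) (Δi Θi : Fin n → S → ℝ),
      (∀ i, 0 ≤ p i) → (∀ i, LC R (Δi i) (Θi i)) →
      mass (fun s => ∑ i, p i * Θi i s) ≤ 1 →
      mass (fun s => ∑ i, p i * Δi i s) ≤ 1 ∧
        LC R (fun s => ∑ i, p i * Δi i s) (fun s => ∑ i, p i * Θi i s)) := by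
  refine ⟨fun n p Δi Θi hp hLC hΔ => ?_, fun n p Δi Θi hp hLC hΘ => ?_⟩
  · have hΘ := LC.mass_weightedSum_eq hsub hmass p hLC ▸ hΔ
    exact ⟨hΘ, LC.weightedSum p hp hLC hΔ hΘ⟩
  · have hΔ := (LC.mass_weightedSum_eq hsub hmass p hLC).symm ▸ hΘ
    exact ⟨hΔ, LC.weightedSum p hp hLC hΔ hΘ⟩
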